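/- Let H be a thick spider with partition (S, K, R) such that the subgraph of H induced by R is P4-sparse, let u ∈ K, and let uw be a tail added to H (w ∉ V(H)). Then the minimum number of fill edges (excluding the tail uw) in a P4-sparse completion of H+uw equals 1; moreover, adding the single fill edge joining u to its unique non-neighbor in S yields a P4-sparse graph. -/

import Mathlib

open SimpleGraph Set

variable {α : Type*}

/-- The graph `G + uw` obtained from `G` by adding the tail edge `uw`. -/
def addTail (G : SimpleGraph α) (u w : α) : SimpleGraph α :=
  G ⊔ SimpleGraph.fromEdgeSet {s(u, w)}

/-- The number of fill edges of a completion `G'` of the base graph `base`: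
the edges of `G'` that are not edges of `base`. -/
noncomputable def fillCount (base G' : SimpleGraph α) : ℕ :=
  (G'.edgeSet \ base.edgeSet).ncard

/-- `S` is an independent set of the graph `G`. -/
def IsIndepSetOn (G : SimpleGraph α) (S : Set α) : Prop :=
  ∀ x ∈ S, ∀ y ∈ S, ¬ G.Adj x y

/-- A graph is split if its vertex set can be partitioned into a clique and an
independent set. -/
def IsSplitGraph (G : SimpleGraph α) : Prop :=
  ∃ K S : Set α, K ∪ S = Set.univ ∧ Disjoint K S ∧ G.IsClique K ∧ IsIndepSetOn G S

/-- `a b c d` (in this order) induce a chordless path `P₄` in `G`. -/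
def IsInducedP4 (G : SimpleGraph α) (a b c d : α) : Prop :=
  a ≠ b ∧ a ≠ c ∧ a ≠ d ∧ b ≠ c ∧ b ≠ d ∧ c ≠ d ∧
  G.Adj a b ∧ G.Adj b c ∧ G.Adj c d ∧ ¬ G.Adj a c ∧ ¬ G.Adj a d ∧ ¬ G.Adj b d

/-- `a b c d` (in this order) induce a chordless cycle `C₄` in `G`. -/
def IsInducedC4 (G : SimpleGraph α) (a b c d : α) : Prop :=
  a ≠ b ∧ a ≠ c ∧ a ≠ d ∧ b ≠ c ∧ b ≠ d ∧ c ≠ d ∧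
  G.Adj a b ∧ G.Adj b c ∧ G.Adj c d ∧ G.Adj d a ∧ ¬ G.Adj a c ∧ ¬ G.Adj b d

/-- `a b c d` induce a `2K₂` (two independent edges `ab` and `cd`) in `G`. -/
def IsInduced2K2 (G : SimpleGraph α) (a b c d : α) : Prop :=
  a ≠ b ∧ a ≠ c ∧ a ≠ d ∧ b ≠ c ∧ b ≠ d ∧ c ≠ d ∧
  G.Adj a b ∧ G.Adj c d ∧ ¬ G.Adj a c ∧ ¬ G.Adj a d ∧ ¬ G.Adj b c ∧ ¬ G.Adj b d

/-- A graph is threshold iff it has no induced `C₄`, `P₄`, or `2K₂`. -/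
def IsThresholdGraph (G : SimpleGraph α) : Prop :=
  (∀ a b c d, ¬ IsInducedC4 G a b c d) ∧ (∀ a b c d, ¬ IsInducedP4 G a b c d) ∧
  (∀ a b c d, ¬ IsInduced2K2 G a b c d)

/-- A graph is quasi-threshold iff it has no induced `C₄` or `P₄`. -/
def IsQuasiThresholdGraph (G : SimpleGraph α) : Prop :=
  (∀ a b c d, ¬ IsInducedC4 G a b c d) ∧ (∀ a b c d, ¬ IsInducedP4 G a b c d)

/-- `t` is the vertex set of an induced `P₄` of `G`. -/
def IsP4SetOn (G : SimpleGraph α) (t : Set α) : Prop :=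
  ∃ a b c d : α, t = {a, b, c, d} ∧ IsInducedP4 G a b c d

/-- A graph is `P₄`-sparse iff every set of five vertices induces at most one `P₄`. -/
def IsP4Sparse (G : SimpleGraph α) : Prop :=
  ∀ s : Set α, s.ncard = 5 →
    ∀ t₁ ⊆ s, ∀ t₂ ⊆ s, IsP4SetOn G t₁ → IsP4SetOn G t₂ → t₁ = t₂

/-- The subgraph of `H` induced by the set `R` (as a graph on the same vertex type,
all vertices outside `R` being isolated). -/
def restrictSet (H : SimpleGraph α) (R : Set α) : SimpleGraph α where
  Adj x y := H.Adj x y ∧ x ∈ R ∧ y ∈ R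
  symm := ⟨fun x y ⟨h, hx, hy⟩ => ⟨h.symm, hy, hx⟩⟩
  loopless := ⟨fun x h => H.loopless.irrefl x h.1⟩

/-- `(S, K, R)` is a thin-spider partition of (the vertex set of) `H`. -/
def ThinSpider (H : SimpleGraph α) (S K R : Set α) : Prop :=
  IsIndepSetOn H S ∧ H.IsClique K ∧ S.ncard = K.ncard ∧ 2 ≤ K.ncard ∧
  Disjoint S K ∧ Disjoint S R ∧ Disjoint K R ∧
  (∀ r ∈ R, ∀ k ∈ K, H.Adj r k) ∧ (∀ r ∈ R, ∀ s ∈ S, ¬ H.Adj r s) ∧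
  ∃ f : α → α, Set.BijOn f S K ∧ ∀ s ∈ S, ∀ k ∈ K, (H.Adj s k ↔ k = f s)

/-- `(S, K, R)` is a thick-spider partition of (the vertex set of) `H`;
thick spiders are assumed to have `|K| ≥ 3`. -/
def ThickSpider (H : SimpleGraph α) (S K R : Set α) : Prop :=
  IsIndepSetOn H S ∧ H.IsClique K ∧ S.ncard = K.ncard ∧ 3 ≤ K.ncard ∧
  Disjoint S K ∧ Disjoint S R ∧ Disjoint K R ∧
  (∀ r ∈ R, ∀ k ∈ K, H.Adj r k) ∧ (∀ r ∈ R, ∀ s ∈ S, ¬ H.Adj r s) ∧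
  ∃ f : α → α, Set.BijOn f S K ∧ ∀ s ∈ S, ∀ k ∈ K, (H.Adj s k ↔ k ≠ f s)

/-- The set of possible numbers of fill edges of completions of `base` into the
graph class `C`. -/
def completionFills (C : SimpleGraph α → Prop) (base : SimpleGraph α) : Set ℕ :=
  {n | ∃ G' : SimpleGraph α, base ≤ G' ∧ C G' ∧ fillCount base G' = n}

/-!
In `H + uw` the vertex `w` sees only `u`, and `u` misses exactly one vertex `v` of `S`, so
`w u k v` is an induced `P₄` for every `k ∈ K \ {u}`. As `|K| ≥ 3`, two of these lie in one
5-set, so at least one fill edge is needed. After adding `uv`, the vertex `u` is universal and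
hence on no induced `P₄`; neither is `w`, whose only neighbour is `u`. So the induced `P₄`s are
those of `H`, which are the `P₄`s of `H[R]` and the sets `{s, s', f s, f s'}` with `s, s' ∈ S`.
Two different `P₄`s of the second kind span at least three vertices of `S` together with their
three partners in `K`, and a `P₄` of the first kind is disjoint from one of the second, so in
neither case do the two fit into five vertices.
-/

section P4

variable {G H : SimpleGraph α} {a b c d : α}

lemma IsInducedP4.symm (h : IsInducedP4 G a b c d) : IsInducedP4 G d c b a := by
  obtain ⟨hab, hac, had, hbc, hbd, hcd, Aab, Abc, Acd, Nac, Nad, Nbd⟩ := h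
  exact ⟨hcd.symm, hbd.symm, had.symm, hbc.symm, hac.symm, hab.symm, Acd.symm, Abc.symm,
    Aab.symm, fun h => Nbd h.symm, fun h => Nad h.symm, fun h => Nac h.symm⟩

lemma IsInducedP4.ncard_eq (h : IsInducedP4 G a b c d) : ({a, b, c, d} : Set α).ncard = 4 := by
  classical
  obtain ⟨hab, hac, had, hbc, hbd, hcd, -⟩ := h
  rw [ncard_eq_toFinset_card']
  simp [*]

lemma IsP4SetOn.ncard_eq {t : Set α} (h : IsP4SetOn G t) : t.ncard = 4 := by
  obtain ⟨a, b, c, d, rfl, h⟩ := h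
  exact h.ncard_eq

lemma IsInducedP4.not_isP4Sparse {c' : α} (h : IsInducedP4 G a b c d)
    (h' : IsInducedP4 G a b c' d) (hcc' : c ≠ c') : ¬ IsP4Sparse G := by
  have hc : c ∉ ({a, b, c', d} : Set α) := by
    obtain ⟨-, hac, -, hbc, -, hcd, -⟩ := h
    simp [hac.symm, hbc.symm, hcc', hcd]
  have hc' : c' ∉ ({a, b, c, d} : Set α) := by
    obtain ⟨-, hac', -, hbc', -, hc'd, -⟩ := h'
    simp [hac'.symm, hbc'.symm, hcc'.symm, hc'd]
  intro hG
  have h5 : (insert c' {a, b, c, d} : Set α).ncard = 5 := by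
    rw [ncard_insert_of_notMem hc', h.ncard_eq]
  have heq := hG _ h5 {a, b, c, d} (subset_insert _ _) {a, b, c', d}
    (by intro x; simp only [mem_insert_iff, mem_singleton_iff]; tauto)
    ⟨a, b, c, d, rfl, h⟩ ⟨a, b, c', d, rfl, h'⟩
  exact hc (heq ▸ by simp)

lemma IsInducedP4.ne_of_forall_adj {u : α} (hu : ∀ x, x ≠ u → G.Adj u x)
    (h : IsInducedP4 G a b c d) : a ≠ u ∧ b ≠ u ∧ c ≠ u ∧ d ≠ u := by
  obtain ⟨-, hac, had, -, hbd, -, -, -, -, Nac, Nad, Nbd⟩ := h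
  refine ⟨?_, ?_, ?_, ?_⟩ <;> rintro rfl
  exacts [Nac (hu _ hac.symm), Nbd (hu _ hbd.symm), Nac (hu _ hac).symm, Nad (hu _ had).symm]

lemma IsInducedP4.of_le_of_forall_adj {u : α} (hle : H ≤ G)
    (hGH : ∀ x y, G.Adj x y → x ≠ u → y ≠ u → H.Adj x y) (hu : ∀ x, x ≠ u → G.Adj u x)
    (h : IsInducedP4 G a b c d) : IsInducedP4 H a b c d := by
  obtain ⟨ha, hb, hc, hd⟩ := h.ne_of_forall_adj hu
  obtain ⟨hab, hac, had, hbc, hbd, hcd, Aab, Abc, Acd, Nac, Nad, Nbd⟩ := h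
  exact ⟨hab, hac, had, hbc, hbd, hcd, hGH _ _ Aab ha hb, hGH _ _ Abc hb hc, hGH _ _ Acd hc hd,
    fun h => Nac (hle h), fun h => Nad (hle h), fun h => Nbd (hle h)⟩

lemma IsP4Sparse.of_forall_isP4SetOn (hH : IsP4Sparse H)
    (h : ∀ t, IsP4SetOn G t → IsP4SetOn H t) : IsP4Sparse G :=
  fun s hs t₁ h₁ t₂ h₂ p₁ p₂ => hH s hs t₁ h₁ t₂ h₂ (h _ p₁) (h _ p₂)

lemma IsInducedP4.restrictSet {R : Set α} (h : IsInducedP4 H a b c d) (ha : a ∈ R)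
    (hb : b ∈ R) (hc : c ∈ R) (hd : d ∈ R) : IsInducedP4 (restrictSet H R) a b c d := by
  obtain ⟨hab, hac, had, hbc, hbd, hcd, Aab, Abc, Acd, Nac, Nad, Nbd⟩ := h
  exact ⟨hab, hac, had, hbc, hbd, hcd, ⟨Aab, ha, hb⟩, ⟨Abc, hb, hc⟩, ⟨Acd, hc, hd⟩,
    fun h => Nac h.1, fun h => Nad h.1, fun h => Nbd h.1⟩

end P4

lemma addTail_adj {G : SimpleGraph α} {u w x y : α} :
    (addTail G u w).Adj x y ↔ G.Adj x y ∨ (x = u ∧ y = w ∨ x = w ∧ y = u) ∧ x ≠ y := by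
  simp [addTail]

lemma fillCount_sup_edge {G : SimpleGraph α} {x y : α} (hxy : x ≠ y) (h : ¬ G.Adj x y) :
    fillCount G (G ⊔ fromEdgeSet {s(x, y)}) = 1 := by
  rw [fillCount, edgeSet_sup, union_sdiff_left, edgeSet_fromEdgeSet, ncard_eq_one]
  exact ⟨s(x, y), eq_singleton_iff_unique_mem.mpr
    ⟨⟨⟨rfl, by simpa using hxy⟩, h⟩, fun e he => he.1.1⟩⟩

lemma eq_of_le_of_fillCount_eq_zero [Finite α] {base G : SimpleGraph α} (hle : base ≤ G)
    (h : fillCount base G = 0) : G = base := by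
  rw [fillCount, ncard_eq_zero, sdiff_eq_empty, edgeSet_subset_edgeSet] at h
  exact le_antisymm h hle

lemma isLeast_one_completionFills [Finite α] {C : SimpleGraph α → Prop} {base : SimpleGraph α}
    (hbase : ¬ C base) (h : 1 ∈ completionFills C base) : IsLeast (completionFills C base) 1 := by
  refine ⟨h, ?_⟩
  rintro n ⟨G, hle, hG, rfl⟩
  rw [Nat.one_le_iff_ne_zero]
  intro h0
  exact hbase (eq_of_le_of_fillCount_eq_zero hle h0 ▸ hG)

lemma Set.ncard_union_image_of_disjoint [Finite α] {T : Set α} {f : α → α} (hf : InjOn f T)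
    (hT : Disjoint T (f '' T)) : (T ∪ f '' T).ncard = 2 * T.ncard := by
  rw [ncard_union_eq hT, hf.ncard_image, two_mul]

namespace ThickSpider

variable {H : SimpleGraph α} {S K R : Set α} {a b c d : α}

lemma isClique (hH : ThickSpider H S K R) : H.IsClique K := hH.2.1

lemma disjoint_S_K (hH : ThickSpider H S K R) : Disjoint S K := hH.2.2.2.2.1

lemma disjoint_K_R (hH : ThickSpider H S K R) : Disjoint K R := hH.2.2.2.2.2.2.1

lemma mem_K_of_mem_S_of_adj (hH : ThickSpider H S K R)
    (hsupp : ∀ x y, H.Adj x y → x ∈ S ∪ K ∪ R) {s x : α} (hs : s ∈ S) (h : H.Adj s x) :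
    x ∈ K := by
  obtain ⟨hS, -, -, -, -, -, -, -, hRS, -⟩ := hH
  rcases hsupp x s h.symm with (hx | hx) | hx
  · exact absurd h (hS s hs x hx)
  · exact hx
  · exact absurd h.symm (hRS x hx s hs)

lemma isInducedP4_snd_notMem_S (hH : ThickSpider H S K R)
    (hsupp : ∀ x y, H.Adj x y → x ∈ S ∪ K ∪ R) (h : IsInducedP4 H a b c d) : b ∉ S := by
  obtain ⟨-, hac, -, -, -, -, Aab, Abc, -, Nac, -, -⟩ := h
  intro hb
  exact Nac (hH.isClique (hH.mem_K_of_mem_S_of_adj hsupp hb Aab.symm)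
    (hH.mem_K_of_mem_S_of_adj hsupp hb Abc) hac)

lemma isInducedP4_mem_of_snd_mem_K (hH : ThickSpider H S K R)
    (hsupp : ∀ x y, H.Adj x y → x ∈ S ∪ K ∪ R) (h : IsInducedP4 H a b c d) (hb : b ∈ K) :
    a ∈ S ∧ c ∈ K ∧ d ∈ S := by
  have hSK : ∀ {s x}, s ∈ S → H.Adj s x → x ∈ K := hH.mem_K_of_mem_S_of_adj hsupp
  obtain ⟨-, hK, -, -, -, -, -, hRK, -⟩ := hH
  obtain ⟨-, hac, -, -, hbd, -, Aab, -, Acd, Nac, -, Nbd⟩ := h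
  have hd : d ∈ S := by
    rcases hsupp d c Acd.symm with (hd | hd) | hd
    · exact hd
    · exact absurd (hK hb hd hbd) Nbd
    · exact absurd (hRK d hd b hb).symm Nbd
  have hc : c ∈ K := hSK hd Acd.symm
  refine ⟨?_, hc, hd⟩
  rcases hsupp a b Aab with (ha | ha) | ha
  · exact ha
  · exact absurd (hK ha hc hac) Nac
  · exact absurd (hRK a ha c hc) Nac

lemma isInducedP4_fst_mem_R (hH : ThickSpider H S K R)
    (hsupp : ∀ x y, H.Adj x y → x ∈ S ∪ K ∪ R) (h : IsInducedP4 H a b c d) (hb : b ∈ R)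
    (hc : c ∈ R) : a ∈ R := by
  obtain ⟨-, -, -, -, -, -, -, hRK, hRS, -⟩ := hH
  obtain ⟨-, -, -, -, -, -, Aab, -, -, Nac, -, -⟩ := h
  rcases hsupp a b Aab with (ha | ha) | ha
  · exact absurd Aab.symm (hRS b hb a ha)
  · exact absurd (hRK c hc a ha).symm Nac
  · exact ha

lemma isInducedP4_cases (hH : ThickSpider H S K R)
    (hsupp : ∀ x y, H.Adj x y → x ∈ S ∪ K ∪ R) (h : IsInducedP4 H a b c d) :
    (a ∈ R ∧ b ∈ R ∧ c ∈ R ∧ d ∈ R) ∨ (a ∈ S ∧ b ∈ K ∧ c ∈ K ∧ d ∈ S) := by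
  have Abc : H.Adj b c := h.2.2.2.2.2.2.2.1
  rcases hsupp b c Abc with (hb | hb) | hb
  · exact absurd hb (hH.isInducedP4_snd_notMem_S hsupp h)
  · obtain ⟨ha, hc, hd⟩ := hH.isInducedP4_mem_of_snd_mem_K hsupp h hb
    exact .inr ⟨ha, hb, hc, hd⟩
  rcases hsupp c b Abc.symm with (hc | hc) | hc
  · exact absurd hc (hH.isInducedP4_snd_notMem_S hsupp h.symm)
  · exact absurd hb (disjoint_left.1 hH.disjoint_K_R
      (hH.isInducedP4_mem_of_snd_mem_K hsupp h.symm hc).2.1)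
  · exact .inl ⟨hH.isInducedP4_fst_mem_R hsupp h hb hc, hb, hc,
      hH.isInducedP4_fst_mem_R hsupp h.symm hc hb⟩

lemma isP4SetOn_cases (hH : ThickSpider H S K R)
    (hsupp : ∀ x y, H.Adj x y → x ∈ S ∪ K ∪ R) (f : α → α)
    (hf : ∀ s ∈ S, ∀ k ∈ K, (H.Adj s k ↔ k ≠ f s)) {t : Set α} (ht : IsP4SetOn H t) :
    (t ⊆ R ∧ IsP4SetOn (restrictSet H R) t) ∨ ∃ P ⊆ S, P.ncard = 2 ∧ t = P ∪ f '' P := by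
  obtain ⟨a, b, c, d, rfl, h⟩ := ht
  rcases hH.isInducedP4_cases hsupp h with ⟨ha, hb, hc, hd⟩ | ⟨ha, hb, hc, hd⟩
  · refine .inl ⟨?_, a, b, c, d, rfl, h.restrictSet ha hb hc hd⟩
    rintro x (rfl | rfl | rfl | rfl) <;> assumption
  · obtain ⟨-, -, had, -, -, -, -, -, -, Nac, -, Nbd⟩ := h
    obtain rfl : b = f d := not_ne_iff.1 fun hne => Nbd ((hf d hd b hb).2 hne).symm
    obtain rfl : c = f a := not_ne_iff.1 fun hne => Nac ((hf a ha c hc).2 hne)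
    refine .inr ⟨{a, d}, pair_subset ha hd, ncard_pair had, ?_⟩
    rw [image_pair]
    ext x
    simp only [mem_insert_iff, mem_singleton_iff, mem_union]
    tauto

theorem isP4Sparse [Finite α] (hH : ThickSpider H S K R)
    (hsupp : ∀ x y, H.Adj x y → x ∈ S ∪ K ∪ R) (hR : IsP4Sparse (restrictSet H R)) :
    IsP4Sparse H := by
  have hcases := hH.isP4SetOn_cases hsupp
  obtain ⟨-, -, -, -, hSK, hSR, hKR, -, -, f, hf, hfadj⟩ := hH
  have hlegs : ∀ P ⊆ S, P ∪ f '' P ⊆ S ∪ K ∧ (P ∪ f '' P).ncard = 2 * P.ncard := by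
    intro P hP
    have hPK : f '' P ⊆ K := image_subset_iff.2 (hP.trans hf.mapsTo)
    exact ⟨union_subset_union hP hPK,
      ncard_union_image_of_disjoint (hf.injOn.mono hP) (hSK.mono hP hPK)⟩
  intro s hs t₁ ht₁ t₂ ht₂ p₁ p₂
  have hmixed : ∀ t ⊆ s, ∀ t' ⊆ s, t ⊆ R → t' ⊆ S ∪ K →
      IsP4SetOn H t → IsP4SetOn H t' → False := by
    intro t ht t' ht' htR ht'SK p p'
    have hdisj : Disjoint t t' := (disjoint_union_right.2 ⟨hSR.symm, hKR.symm⟩).mono htR ht'SK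
    have := ncard_le_ncard (union_subset ht ht')
    rw [ncard_union_eq hdisj, p.ncard_eq, p'.ncard_eq, hs] at this
    omega
  rcases hcases f hfadj p₁ with ⟨hR₁, q₁⟩ | ⟨P₁, hP₁, hP₁2, rfl⟩ <;>
    rcases hcases f hfadj p₂ with ⟨hR₂, q₂⟩ | ⟨P₂, hP₂, hP₂2, rfl⟩
  · exact hR s hs t₁ ht₁ t₂ ht₂ q₁ q₂
  · exact (hmixed _ ht₁ _ ht₂ hR₁ (hlegs P₂ hP₂).1 p₁ p₂).elim
  · exact (hmixed _ ht₂ _ ht₁ hR₂ (hlegs P₁ hP₁).1 p₂ p₁).elim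
  · have hle : 2 * (P₁ ∪ P₂).ncard ≤ 5 := by
      rw [← (hlegs _ (union_subset hP₁ hP₂)).2, ← hs, image_union, union_union_union_comm]
      exact ncard_le_ncard (union_subset ht₁ ht₂)
    have h₁ := eq_of_subset_of_ncard_le subset_union_left (by omega : (P₁ ∪ P₂).ncard ≤ P₁.ncard)
    have h₂ := eq_of_subset_of_ncard_le subset_union_right (by omega : (P₁ ∪ P₂).ncard ≤ P₂.ncard)
    rw [h₁.trans h₂.symm]

lemma exists_not_adj (hH : ThickSpider H S K R) {k : α} (hk : k ∈ K) :
    ∃ s ∈ S, ¬ H.Adj k s := by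
  obtain ⟨-, -, -, -, -, -, -, -, -, f, hf, hfadj⟩ := hH
  obtain ⟨s, hs, rfl⟩ := hf.surjOn hk
  exact ⟨s, hs, fun h => (hfadj s hs _ hk).1 h.symm rfl⟩

lemma eq_of_not_adj_of_mem_K (hH : ThickSpider H S K R) {k s s' : α} (hk : k ∈ K)
    (hs : s ∈ S) (hs' : s' ∈ S) (h : ¬ H.Adj k s) (h' : ¬ H.Adj k s') : s = s' := by
  obtain ⟨-, -, -, -, -, -, -, -, -, f, hf, hfadj⟩ := hH
  have hpartner : ∀ x ∈ S, ¬ H.Adj k x → f x = k := fun x hx hkx =>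
    (not_ne_iff.1 fun hne => hkx ((hfadj x hx k hk).2 hne.symm).symm)
  exact hf.injOn hs hs' ((hpartner s hs h).trans (hpartner s' hs' h').symm)

lemma adj_of_not_adj_of_mem_S (hH : ThickSpider H S K R) {s k k' : α} (hs : s ∈ S)
    (hk : k ∈ K) (hk' : k' ∈ K) (h : ¬ H.Adj k s) (hkk' : k' ≠ k) : H.Adj k' s := by
  obtain ⟨-, -, -, -, -, -, -, -, -, f, -, hfadj⟩ := hH
  obtain rfl : k = f s := not_ne_iff.1 fun hne => h ((hfadj s hs k hk).2 hne).symm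
  exact ((hfadj s hs k' hk').2 hkk').symm

lemma adj_of_mem_K (hH : ThickSpider H S K R) {k s x : α} (hk : k ∈ K) (hs : s ∈ S)
    (hks : ¬ H.Adj k s) (hx : x ∈ S ∪ K ∪ R) (hxk : x ≠ k) (hxs : x ≠ s) : H.Adj k x := by
  rcases hx with (hx | hx) | hx
  · by_contra h
    exact hxs (hH.eq_of_not_adj_of_mem_K hk hx hs h hks)
  · exact hH.isClique hk hx hxk.symm
  · obtain ⟨-, -, -, -, -, -, -, hRK, -⟩ := hH
    exact (hRK x hx k hk).symm

theorem not_isP4Sparse_addTail [Finite α] (hH : ThickSpider H S K R) {u w : α}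
    (hwSK : w ∉ S ∪ K) (hw : ∀ x, ¬ H.Adj w x) (hu : u ∈ K) :
    ¬ IsP4Sparse (addTail H u w) := by
  obtain ⟨v, hv, huv⟩ := hH.exists_not_adj hu
  have hwne : ∀ {x}, x ∈ S ∪ K → w ≠ x := fun hx h => hwSK (h ▸ hx)
  have hvne : ∀ {x}, x ∈ K → x ≠ v := fun hx h => disjoint_left.1 hH.disjoint_S_K hv (h ▸ hx)
  have hwu : w ≠ u := hwne (.inr hu)
  have hwv : w ≠ v := hwne (.inl hv)
  have hP4 : ∀ k ∈ K, k ≠ u → IsInducedP4 (addTail H u w) w u k v := by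
    intro k hk hku
    refine ⟨hwu, hwne (.inr hk), hwv, hku.symm, hvne hu, hvne hk,
      ?_, ?_, ?_, ?_, ?_, ?_⟩
    · exact addTail_adj.2 (.inr ⟨.inr ⟨rfl, rfl⟩, hwu⟩)
    · exact addTail_adj.2 (.inl (hH.isClique hu hk hku.symm))
    · exact addTail_adj.2 (.inl (hH.adj_of_not_adj_of_mem_S hv hu hk huv hku))
    · simp [addTail_adj, hw, hku, hwu]
    · simp [addTail_adj, hw, (hvne hu).symm, hwu]
    · simp [addTail_adj, huv, (hvne hu).symm, hwv.symm]
  have hK : 1 < (K \ {u}).ncard := by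
    obtain ⟨-, -, -, hK3, -⟩ := hH
    rw [ncard_sdiff_singleton_of_mem hu]
    omega
  obtain ⟨k₁, ⟨hk₁, hk₁u⟩, k₂, ⟨hk₂, hk₂u⟩, hk₁₂⟩ := (one_lt_ncard).1 hK
  exact (hP4 k₁ hk₁ hk₁u).not_isP4Sparse (hP4 k₂ hk₂ hk₂u) hk₁₂

theorem isP4Sparse_addTail_sup [Finite α] (hH : ThickSpider H S K R) {u v w : α}
    (hcover : S ∪ K ∪ R = {w}ᶜ) (hw : ∀ x, ¬ H.Adj w x)
    (hR : IsP4Sparse (restrictSet H R)) (hu : u ∈ K) (hv : v ∈ S) (huv : ¬ H.Adj u v) :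
    IsP4Sparse (addTail H u w ⊔ fromEdgeSet {s(u, v)}) := by
  have hsupp : ∀ x y, H.Adj x y → x ∈ S ∪ K ∪ R := fun x y h => by
    rw [hcover, mem_compl_singleton_iff]
    rintro rfl
    exact hw y h
  have huw : u ≠ w := by
    have : u ∈ S ∪ K ∪ R := .inl (.inr hu)
    rwa [hcover, mem_compl_singleton_iff] at this
  have huv' : u ≠ v := fun h => disjoint_left.1 hH.disjoint_S_K hv (h ▸ hu)
  have hle : H ≤ addTail H u w ⊔ fromEdgeSet {s(u, v)} := le_sup_left.trans le_sup_left
  refine (hH.isP4Sparse hsupp hR).of_forall_isP4SetOn ?_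
  rintro t ⟨a, b, c, d, rfl, h⟩
  refine ⟨a, b, c, d, rfl, h.of_le_of_forall_adj (u := u) hle ?_ ?_⟩
  · intro x y hxy hx hy
    simpa [addTail_adj, hx, hy] using hxy
  · intro x hxu
    by_cases hxw : x = w
    · simp [addTail_adj, hxw, huw]
    by_cases hxv : x = v
    · simp [hxv, huv']
    have hx : x ∈ S ∪ K ∪ R := by rw [hcover]; exact hxw
    exact hle (hH.adj_of_mem_K hu hv huv hx hxu hxv)

end ThickSpider

/-- tail at `u ∈ K` of a thick spider with `H[R]` P₄-sparse: the
minimum number of fill edges is `1`, and adding the single fill edge joining `u`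
to its (unique) non-neighbor in `S` yields a P₄-sparse graph. -/
theorem thickSpider_tail_K [Fintype α]
    (H : SimpleGraph α) (u w : α) (S K R : Set α)
    (hspider : ThickSpider H S K R)
    (hcover : S ∪ K ∪ R = {w}ᶜ)
    (hw : ∀ x, ¬ H.Adj w x)
    (hRsparse : IsP4Sparse (restrictSet H R)) (hu : u ∈ K) :
    IsLeast (completionFills IsP4Sparse (addTail H u w)) 1 ∧
      ∀ v ∈ S, ¬ H.Adj u v →
        IsP4Sparse (addTail H u w ⊔ SimpleGraph.fromEdgeSet {s(u, v)}) := by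
  have hsparse : ∀ v ∈ S, ¬ H.Adj u v →
      IsP4Sparse (addTail H u w ⊔ SimpleGraph.fromEdgeSet {s(u, v)}) := fun v hv huv =>
    hspider.isP4Sparse_addTail_sup hcover hw hRsparse hu hv huv
  have hwSK : w ∉ S ∪ K := fun h => by simpa using hcover.subset (subset_union_left h)
  obtain ⟨v, hv, huv⟩ := hspider.exists_not_adj hu
  have hfill : fillCount (addTail H u w) (addTail H u w ⊔ fromEdgeSet {s(u, v)}) = 1 := by
    have huv' : u ≠ v := fun h => disjoint_left.1 hspider.disjoint_S_K hv (h ▸ hu)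
    have hvw : v ≠ w := fun h => hwSK (h ▸ .inl hv)
    exact fillCount_sup_edge huv' (by simp [addTail_adj, huv, huv'.symm, hvw])
  exact ⟨isLeast_one_completionFills (hspider.not_isP4Sparse_addTail hwSK hw hu)
    ⟨_, le_sup_left, hsparse v hv huv, hfill⟩, hsparse⟩
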